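/- Let F₂ = ⟨a, b⟩ be the free group of rank 2 and let φ : F₂ → F₂ be the endomorphism defined by φ(a) = a and φ(b) = b⁻¹ a b. Then φ is injective but not surjective, and for every k ≥ 1, the fixed subgroup Fix(φ^k) equals the cyclic subgroup ⟨a⟩. -/

import Mathlib

/-- The generator `a` of `F₂`. -/
def genA : FreeGroup (Fin 2) := FreeGroup.of 0

/-- The generator `b` of `F₂`. -/
def genB : FreeGroup (Fin 2) := FreeGroup.of 1

/-- The endomorphism of `F₂ = ⟨a, b⟩` with `φ(a) = a`, `φ(b) = b⁻¹ a b`. -/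
def phi18 : Monoid.End (FreeGroup (Fin 2)) :=
  FreeGroup.lift (fun i => if i = 0 then genA else genB⁻¹ * genA * genB)

/-- The fixed subgroup of a group endomorphism. -/
def fixSubgroup {G : Type*} [Group G] (φ : Monoid.End G) : Subgroup G where
  carrier := {g | φ g = g}
  one_mem' := by simp
  mul_mem' := by
    intro a b ha hb
    simp only [Set.mem_setOf_eq, map_mul] at *
    rw [ha, hb]
  inv_mem' := by
    intro a ha
    simp only [Set.mem_setOf_eq, map_inv] at *
    rw [ha]

namespace Phi18Aux

open FreeGroup List

abbrev Ltr := Fin 2 × Bool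

lemma fin2 (i : Fin 2) : i = 0 ∨ i = 1 := by fin_cases i <;> simp

/-- Adjacent letters that do not cancel. -/
def Rc (x y : Ltr) : Prop := ¬(x.1 = y.1 ∧ x.2 = !y.2)

lemma Rc_of_ne {x y : Ltr} (h : x.1 ≠ y.1) : Rc x y := fun hc => h hc.1

lemma chain'_reduce (L : List Ltr) : List.Chain' Rc (FreeGroup.reduce L) := by
  induction L with
  | nil => exact List.isChain_nil
  | cons x L ih =>
    rw [FreeGroup.reduce.cons]
    cases h : FreeGroup.reduce L with
    | nil => exact List.isChain_singleton _
    | cons hd tl =>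
      rw [h] at ih
      by_cases hc : x.1 = hd.1 ∧ x.2 = !hd.2
      · simpa [hc, List.Chain'] using ih.tail
      · simpa [hc, List.Chain'] using (List.isChain_cons_cons.mpr ⟨hc, ih⟩)

lemma reduce_eq_self_of_chain' {L : List Ltr} (h : List.Chain' Rc L) :
    FreeGroup.reduce L = L := by
  induction L with
  | nil => simp
  | cons x L ih =>
    have hL : List.Chain' Rc L := h.tail
    rw [FreeGroup.reduce.cons, ih hL]
    cases L with
    | nil => rfl
    | cons hd tl =>
      have : Rc x hd := (List.isChain_cons_cons.mp h).1
      simpa [Rc] using fun h1 h2 => absurd ⟨h1, h2⟩ this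

/-- The reduced word representing the image under `phi18` of the word `L`;
the flag records whether we are inside a run of `b`-letters (in which case a
closing `b` is still pending). -/
def Tf : Bool → List Ltr → List Ltr
  | false, [] => []
  | true, [] => [((1 : Fin 2), true)]
  | false, x :: L =>
      if x.1 = 0 then x :: Tf false L
      else ((1 : Fin 2), false) :: ((0 : Fin 2), x.2) :: Tf true L
  | true, x :: L =>
      if x.1 = 0 then ((1 : Fin 2), true) :: x :: Tf false L
      else ((0 : Fin 2), x.2) :: Tf true L

/-- Evaluation of a word as a group element. -/
def P (L : List Ltr) : FreeGroup (Fin 2) :=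
  (L.map fun x => cond x.2 (of x.1) (of x.1)⁻¹).prod

lemma P_cons (x : Ltr) (L : List Ltr) :
    P (x :: L) = (cond x.2 (of x.1) (of x.1)⁻¹) * P L := by
  simp [P]

lemma mkP (L : List Ltr) : mk L = P L := by
  rw [← FreeGroup.lift_of_apply (mk L), FreeGroup.lift_mk]; rfl

lemma phiP (L : List Ltr) :
    phi18 (mk L) = (L.map fun x =>
      cond x.2 (if x.1 = 0 then genA else genB⁻¹ * genA * genB)
        (if x.1 = 0 then genA else genB⁻¹ * genA * genB)⁻¹).prod :=
  FreeGroup.lift_mk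

lemma P_Tf : ∀ L : List Ltr,
    P (Tf false L) = phi18 (mk L) ∧ P (Tf true L) = of 1 * phi18 (mk L) := by
  intro L
  induction L with
  | nil =>
    constructor <;> simp [Tf, P, phiP, genB]
  | cons x L ih =>
    obtain ⟨ihF, ihT⟩ := ih
    obtain ⟨i, s⟩ := x
    rw [phiP] at ihF ihT
    rcases fin2 i with rfl | rfl <;> cases s <;>
      constructor <;>
      simp [Tf, P_cons, phiP, ihF, ihT, genA, genB, mul_assoc]

lemma mk_Tf_false (L : List Ltr) : mk (Tf false L) = phi18 (mk L) := by
  rw [mkP]; exact (P_Tf L).1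

lemma head?_Tf_false (L : List Ltr) :
    (Tf false L).head? = L.head?.map (fun x => if x.1 = 0 then x else ((1 : Fin 2), false)) := by
  cases L with
  | nil => rfl
  | cons x L => by_cases h : x.1 = 0 <;> simp [Tf, h]

lemma head?_Tf_true (L : List Ltr) :
    (Tf true L).head? = some ((L.head?.map
      (fun x => if x.1 = 0 then ((1:Fin 2), true) else ((0 : Fin 2), x.2))).getD ((1:Fin 2), true)) := by
  cases L with
  | nil => rfl
  | cons x L => by_cases h : x.1 = 0 <;> simp [Tf, h]

lemma chain_Tf : ∀ L : List Ltr, List.Chain' Rc L →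
    List.Chain' Rc (Tf false L) ∧ List.Chain' Rc (Tf true L) := by
  intro L
  induction L with
  | nil => intro _; constructor <;> simp [Tf, List.Chain', List.isChain_nil, List.isChain_singleton]
  | cons x L ih =>
    intro h
    have hL : List.Chain' Rc L := h.tail
    have hhead : ∀ y ∈ L.head?, Rc x y := (List.isChain_cons.mp h).1
    obtain ⟨ihF, ihT⟩ := ih hL
    rcases fin2 x.1 with h0 | h1
    · -- x is an a-letter
      have hxF : ∀ y ∈ (Tf false L).head?, Rc x y := by
        rw [head?_Tf_false]
        intro y hy
        cases hL' : L.head? with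
        | none => simp [hL'] at hy
        | some z =>
          simp [hL'] at hy
          by_cases hz : z.1 = 0
          · rw [if_pos hz] at hy; subst hy; exact hhead z (by simp [hL'])
          · rw [if_neg hz] at hy; subst hy; exact Rc_of_ne (by simp [h0])
      constructor
      · show List.Chain' Rc (Tf false (x :: L))
        rw [Tf, if_pos h0]
        exact List.isChain_cons.mpr ⟨hxF, ihF⟩
      · show List.Chain' Rc (Tf true (x :: L))
        rw [Tf, if_pos h0]
        refine List.isChain_cons.mpr ⟨?_, List.isChain_cons.mpr ⟨hxF, ihF⟩⟩
        intro y hy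
        simp at hy
        subst hy
        exact Rc_of_ne (by simp [h0])
    · -- x is a b-letter
      have hxT : ∀ y ∈ (Tf true L).head?, Rc ((0 : Fin 2), x.2) y := by
        rw [head?_Tf_true]
        intro y hy
        simp at hy
        cases hL' : L.head? with
        | none => rw [hL'] at hy; simp at hy; subst hy; exact Rc_of_ne (by simp)
        | some z =>
          rw [hL'] at hy; simp at hy
          by_cases hz : z.1 = 0
          · rw [if_pos hz] at hy; subst hy; exact Rc_of_ne (by simp)
          · rw [if_neg hz] at hy
            subst hy
            have := hhead z (by simp [hL'])
            rcases fin2 z.1 with hz0 | hz1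
            · exact absurd hz0 hz
            · intro hc
              exact this ⟨by rw [h1, hz1], by simpa using hc.2⟩
      constructor
      · show List.Chain' Rc (Tf false (x :: L))
        rw [Tf, if_neg (by rw [h1]; exact one_ne_zero)]
        refine List.isChain_cons.mpr ⟨?_, List.isChain_cons.mpr ⟨hxT, ihT⟩⟩
        intro y hy
        simp at hy
        subst hy
        exact Rc_of_ne (by simp)
      · show List.Chain' Rc (Tf true (x :: L))
        rw [Tf, if_neg (by rw [h1]; exact one_ne_zero)]
        exact List.isChain_cons.mpr ⟨hxT, ihT⟩

lemma len_Tf : ∀ L : List Ltr,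
    L.length ≤ (Tf false L).length ∧ L.length + 1 ≤ (Tf true L).length := by
  intro L
  induction L with
  | nil => simp [Tf]
  | cons x L ih =>
    obtain ⟨ihF, ihT⟩ := ih
    by_cases h : x.1 = 0 <;> constructor <;> simp [Tf, h] <;> omega

lemma len_Tf_strict : ∀ L : List Ltr, (∃ p ∈ L, p.1 ≠ 0) →
    L.length < (Tf false L).length := by
  intro L
  induction L with
  | nil => rintro ⟨p, hp, -⟩; simp at hp
  | cons x L ih =>
    rintro ⟨p, hp, hp1⟩
    by_cases h : x.1 = 0
    · have hex : ∃ p ∈ L, p.1 ≠ 0 := by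
        rcases List.mem_cons.mp hp with rfl | hmem
        · exact absurd h hp1
        · exact ⟨p, hmem, hp1⟩
      have := ih hex
      simp [Tf, h]
      omega
    · have := (len_Tf L).2
      simp [Tf, h]
      omega

lemma Tf_inj : ∀ (L1 : List Ltr) (fl : Bool) (L2 : List Ltr), Tf fl L1 = Tf fl L2 → L1 = L2 := by
  intro L1
  induction L1 with
  | nil =>
    intro fl L2 h
    cases L2 with
    | nil => rfl
    | cons y L2 =>
      exfalso
      rcases fin2 y.1 with hy | hy <;> cases fl <;> simp [Tf, hy] at h
  | cons x L1 ih =>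
    intro fl L2 h
    cases L2 with
    | nil =>
      exfalso
      rcases fin2 x.1 with hx | hx <;> cases fl <;> simp [Tf, hx] at h
    | cons y L2 =>
      rcases fin2 x.1 with hx | hx <;> rcases fin2 y.1 with hy | hy <;>
        cases fl <;> simp [Tf, hx, hy] at h
      all_goals first
        | rw [h.1, ih false L2 h.2]
        | rw [Prod.ext (hx.trans hy.symm) h.1, ih true L2 h.2]
        | exact absurd h.1 (by simp [Prod.ext_iff, hx, hy])

lemma reduced_toWord (w : FreeGroup (Fin 2)) : List.Chain' Rc w.toWord :=
  (FreeGroup.reduce_toWord w) ▸ chain'_reduce w.toWord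

lemma phi_eq (w : FreeGroup (Fin 2)) : phi18 w = mk (Tf false w.toWord) := by
  rw [mk_Tf_false, FreeGroup.mk_toWord]

lemma toWord_phi (w : FreeGroup (Fin 2)) : (phi18 w).toWord = Tf false w.toWord := by
  rw [phi_eq, FreeGroup.toWord_mk,
    reduce_eq_self_of_chain' (chain_Tf _ (reduced_toWord w)).1]

lemma norm_def (w : FreeGroup (Fin 2)) : FreeGroup.norm w = w.toWord.length := rfl

lemma noB_mem (L : List Ltr) (h : ∀ p ∈ L, p.1 = 0) :
    mk L ∈ Subgroup.closure ({genA} : Set (FreeGroup (Fin 2))) := by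
  induction L with
  | nil =>
    rw [← FreeGroup.one_eq_mk]; exact one_mem _
  | cons x L ih =>
    rw [mkP, P_cons, ← mkP]
    have hA : FreeGroup.of x.1 ∈ Subgroup.closure ({genA} : Set (FreeGroup (Fin 2))) := by
      rw [h x (by simp)]
      exact Subgroup.subset_closure rfl
    refine mul_mem ?_ (ih fun p hp => h p (by simp [hp]))
    cases x.2 <;> simp [hA, inv_mem hA]

lemma N1 (w : FreeGroup (Fin 2)) : FreeGroup.norm w ≤ FreeGroup.norm (phi18 w) := by
  rw [norm_def, norm_def, toWord_phi]
  exact (len_Tf w.toWord).1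

lemma N2 (w : FreeGroup (Fin 2)) (h : w ∉ Subgroup.closure ({genA} : Set (FreeGroup (Fin 2)))) :
    FreeGroup.norm w < FreeGroup.norm (phi18 w) := by
  rw [norm_def, norm_def, toWord_phi]
  refine len_Tf_strict w.toWord ?_
  by_contra hc
  push_neg at hc
  exact h (by simpa [FreeGroup.mk_toWord] using noB_mem w.toWord hc)

lemma phiA : phi18 genA = genA := by
  show FreeGroup.lift _ (FreeGroup.of 0) = genA
  rw [FreeGroup.lift_apply_of]
  simp

end Phi18Aux

open Phi18Aux in
/-- The endomorphism `φ` of `F₂` with `φ(a) = a`, `φ(b) = b⁻¹ a b` is injective but not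
surjective, and `Fix (φ^k) = ⟨a⟩` for every `k ≥ 1`. -/
theorem phi18_properties :
    Function.Injective phi18 ∧ ¬ Function.Surjective phi18 ∧
      ∀ k : ℕ, 1 ≤ k → fixSubgroup (phi18 ^ k) = Subgroup.closure {genA} := by
  refine ⟨?_, ?_, ?_⟩
  · -- injectivity
    intro u v h
    apply FreeGroup.toWord_injective
    refine Tf_inj _ false _ ?_
    rw [← toWord_phi, ← toWord_phi, h]
  · -- not surjective
    intro hs
    obtain ⟨w, hw⟩ := hs genB
    have hword : Tf false w.toWord = [((1 : Fin 2), true)] := by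
      rw [← toWord_phi, hw]
      exact FreeGroup.toWord_of 1
    cases hL : w.toWord with
    | nil => rw [hL] at hword; simp [Tf] at hword
    | cons x L =>
      rw [hL] at hword
      rcases fin2 x.1 with hx | hx <;> simp [Tf, hx] at hword
      obtain ⟨h1, -⟩ := hword
      rw [h1] at hx
      exact absurd hx (by decide)
  · -- fixed subgroups
    intro k hk
    have hpow : ∀ (n : ℕ) (w : FreeGroup (Fin 2)), (phi18 ^ n) w = phi18^[n] w :=
      fun n w => rfl
    ext w
    constructor
    · intro hw
      have hfix : (phi18 ^ k) w = w := hw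
      by_contra hnc
      have key : ∀ n : ℕ, FreeGroup.norm w < FreeGroup.norm (phi18^[n + 1] w) := by
        intro n
        induction n with
        | zero => simpa using N2 w hnc
        | succ n ih =>
          rw [Function.iterate_succ_apply']
          exact lt_of_lt_of_le ih (N1 _)
      obtain ⟨m, rfl⟩ : ∃ m, k = m + 1 := ⟨k - 1, by omega⟩
      have := key m
      rw [← hpow, hfix] at this
      exact lt_irrefl _ this
    · intro hw
      obtain ⟨n, rfl⟩ := Subgroup.mem_closure_singleton.mp hw
      show (phi18 ^ k) (genA ^ n) = genA ^ n
      rw [map_zpow, hpow, Function.iterate_fixed phiA k]
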